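/- arXiv:1203.5619 — 6 statements merged into one kernel-verified Lean document; each statement's English description precedes it below -/
import Mathlib

section
/- For every z ∈ ℍ, the increment of the quaternionic exponential admits the expansion exp(z + h) − exp z = ∑_{k=0}^∞ c_k(z) · h · z^k + ω(h), where c_k(z) = ∑_{j=0}^∞ z^j/(j+k+1)! and ‖ω(h)‖/‖h‖ → 0 as h → 0; moreover ∑_{k=0}^∞ ‖c_k(z)‖ · ‖z^k‖ < ∞, so exp is H-differentiable at z with witness sequences A_k = c_k(z), B_k = z^k. -/
open scoped Quaternion
open Filter Topology

/-- A function `f : ℍ → ℍ` is H-differentiable at `z₀` with H-derivative `d` if there exist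
sequences of quaternions `A, B` with `∑ ‖A k‖ * ‖B k‖ < ∞` such that
`f (z₀ + h) - f z₀ = ∑' k, A k * h * B k + ω h` with `‖ω h‖ / ‖h‖ → 0` as `h → 0`,
and `d = ∑' k, A k * B k`. -/
def HDiffAt (f : ℍ[ℝ] → ℍ[ℝ]) (z₀ d : ℍ[ℝ]) : Prop :=
  ∃ A B : ℕ → ℍ[ℝ],
    (Summable fun k => ‖A k‖ * ‖B k‖) ∧
    Filter.Tendsto
      (fun h : ℍ[ℝ] => ‖f (z₀ + h) - f z₀ - ∑' k, A k * h * B k‖ / ‖h‖)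
      (𝓝[≠] (0 : ℍ[ℝ])) (𝓝 0) ∧
    d = ∑' k, A k * B k

/-- The quaternionic exponential, defined by its power series. -/
noncomputable def qexp (z : ℍ[ℝ]) : ℍ[ℝ] := ∑' n : ℕ, ((n.factorial : ℝ)⁻¹) • z ^ n

/-! The series `∑ wⁿ / n!` may be differentiated term by term in any complete normed algebra, since
the derivatives of its terms are bounded by `(2R)ⁿ / n!` on the ball of radius `R`. The derivative
of `wⁿ / n!` at `z` is `h ↦ ∑_{j+k=n-1} zʲ h zᵏ / n!`; collecting the terms by `k` rather than by
`j + k` (an absolutely convergent rearrangement, because `1 / (j+k+1)! ≤ 1 / (j! k!)`) turns the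
derivative into `h ↦ ∑ₖ cₖ(z) h zᵏ`. -/

open scoped Nat RightActions
open Finset

theorem inv_factorial_add_succ_le (j k : ℕ) :
    (((j + k + 1)! : ℝ))⁻¹ ≤ (j ! : ℝ)⁻¹ * (k ! : ℝ)⁻¹ := by
  rw [← mul_inv]
  gcongr
  exact_mod_cast (Nat.le_of_dvd (Nat.factorial_pos _)
    (Nat.factorial_mul_factorial_dvd_factorial_add j k)).trans (Nat.factorial_le (Nat.le_succ _))

theorem Summable.tsum_eq_tsum_sum_antidiagonal {A E : Type*} [AddCommMonoid A] [HasAntidiagonal A]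
    [AddCommMonoid E] [TopologicalSpace E] [ContinuousAdd E] [T3Space E] {f : A × A → E}
    (hf : Summable f) : ∑' p, f p = ∑' n, ∑ p ∈ antidiagonal n, f p := by
  conv_rhs => congr; ext; rw [← sum_finset_coe, ← tsum_fintype (L := .unconditional _)]
  rw [← HasAntidiagonal.sigmaAntidiagonalEquivProd.tsum_eq f]
  exact (HasAntidiagonal.sigmaAntidiagonalEquivProd.summable_iff.mpr hf).tsum_sigma'
    fun n => (hasSum_fintype _).summable

theorem Real.hasSum_pow_div_factorial (x : ℝ) : HasSum (fun n => x ^ n / n !) (Real.exp x) :=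
  Real.exp_eq_exp_ℝ ▸ NormedSpace.expSeries_div_hasSum_exp x

section

variable {𝔸 : Type*} [NormedRing 𝔸] [NormedAlgebra ℝ 𝔸]

noncomputable def expDerivCoeff (z : 𝔸) (k : ℕ) : 𝔸 :=
  ∑' j : ℕ, ((j + k + 1)! : ℝ)⁻¹ • z ^ j

noncomputable def expSeriesTermFDeriv (z : 𝔸) (n : ℕ) : 𝔸 →L[ℝ] 𝔸 :=
  (n ! : ℝ)⁻¹ • ∑ i ∈ range n, z ^ (n.pred - i) •> ContinuousLinearMap.id ℝ 𝔸 <• z ^ i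

theorem expSeriesTermFDeriv_apply (z h : 𝔸) (n : ℕ) :
    expSeriesTermFDeriv z n h = (n ! : ℝ)⁻¹ • ∑ i ∈ range n, z ^ (n.pred - i) * h * z ^ i := by
  simp [expSeriesTermFDeriv]

theorem hasFDerivAt_inv_factorial_smul_pow (z : 𝔸) (n : ℕ) :
    HasFDerivAt (fun w : 𝔸 => (n ! : ℝ)⁻¹ • w ^ n) (expSeriesTermFDeriv z n) z :=
  (hasFDerivAt_pow' n).fun_const_smul _

variable [NormOneClass 𝔸]

theorem norm_inv_factorial_smul_pow_le (n : ℕ) (x : 𝔸) :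
    ‖(n ! : ℝ)⁻¹ • x ^ n‖ ≤ ‖x‖ ^ n / n ! := by
  rw [norm_smul, norm_inv, Real.norm_natCast, inv_mul_eq_div]
  gcongr
  exact norm_pow_le x n

theorem norm_inv_factorial_add_succ_smul_pow_le (z : 𝔸) (j k : ℕ) :
    ‖((j + k + 1)! : ℝ)⁻¹ • z ^ j‖ ≤ ‖z‖ ^ j / j ! * (k ! : ℝ)⁻¹ :=
  calc ‖((j + k + 1)! : ℝ)⁻¹ • z ^ j‖ ≤ ((j + k + 1)! : ℝ)⁻¹ * ‖z‖ ^ j := by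
        rw [norm_smul, norm_inv, Real.norm_natCast]
        gcongr
        exact norm_pow_le z j
    _ ≤ (j ! : ℝ)⁻¹ * (k ! : ℝ)⁻¹ * ‖z‖ ^ j := by gcongr; exact inv_factorial_add_succ_le j k
    _ = ‖z‖ ^ j / j ! * (k ! : ℝ)⁻¹ := by ring

theorem norm_expDerivCoeff_le (z : 𝔸) (k : ℕ) :
    ‖expDerivCoeff z k‖ ≤ Real.exp ‖z‖ * (k ! : ℝ)⁻¹ :=
  tsum_of_norm_bounded ((Real.hasSum_pow_div_factorial ‖z‖).mul_right _)
    fun j => norm_inv_factorial_add_succ_smul_pow_le z j k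

theorem summable_norm_expDerivCoeff_mul_norm_pow (z : 𝔸) :
    Summable fun k => ‖expDerivCoeff z k‖ * ‖z ^ k‖ := by
  refine ((Real.summable_pow_div_factorial ‖z‖).mul_left (Real.exp ‖z‖)).of_nonneg_of_le
    (fun _ => by positivity) fun k => ?_
  calc ‖expDerivCoeff z k‖ * ‖z ^ k‖ ≤ Real.exp ‖z‖ * (k ! : ℝ)⁻¹ * ‖z‖ ^ k := by
        gcongr
        · exact norm_expDerivCoeff_le z k
        · exact norm_pow_le z k
    _ = Real.exp ‖z‖ * (‖z‖ ^ k / k !) := by ring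

theorem norm_expSeriesTermFDeriv_le {R : ℝ} (hR : 1 ≤ R) {z : 𝔸} (hz : ‖z‖ ≤ R) (n : ℕ) :
    ‖expSeriesTermFDeriv z n‖ ≤ (2 * R) ^ n / n ! := by
  have hterm : ∀ i ∈ range n,
      ‖z ^ (n.pred - i) •> ContinuousLinearMap.id ℝ 𝔸 <• z ^ i‖ ≤ R ^ n := by
    intro i hi
    have hexp : n.pred - i + i ≤ n := by
      have := mem_range.mp hi
      rw [Nat.pred_eq_sub_one]
      omega
    refine ContinuousLinearMap.opNorm_le_bound _ (by positivity) fun h => ?_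
    calc ‖(z ^ (n.pred - i) •> ContinuousLinearMap.id ℝ 𝔸 <• z ^ i) h‖
        = ‖z ^ (n.pred - i) * h * z ^ i‖ := by simp [mul_assoc]
      _ ≤ ‖z‖ ^ (n.pred - i) * ‖h‖ * ‖z‖ ^ i :=
          (norm_mul₃_le ..).trans (by gcongr <;> exact norm_pow_le ..)
      _ ≤ R ^ (n.pred - i) * ‖h‖ * R ^ i := by gcongr
      _ = R ^ (n.pred - i + i) * ‖h‖ := by ring
      _ ≤ R ^ n * ‖h‖ := by gcongr
  calc ‖expSeriesTermFDeriv z n‖ ≤ (n ! : ℝ)⁻¹ * (n * R ^ n) := by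
        rw [expSeriesTermFDeriv, norm_smul, norm_inv, Real.norm_natCast]
        gcongr
        exact (norm_sum_le _ _).trans ((sum_le_sum hterm).trans_eq (by simp))
    _ ≤ (n ! : ℝ)⁻¹ * (2 ^ n * R ^ n) := by
        gcongr
        exact_mod_cast Nat.lt_two_pow_self.le
    _ = (2 * R) ^ n / n ! := by ring

variable [CompleteSpace 𝔸]

theorem summable_inv_factorial_add_succ_smul_pow (z : 𝔸) (k : ℕ) :
    Summable fun j => ((j + k + 1)! : ℝ)⁻¹ • z ^ j :=
  .of_norm_bounded ((Real.summable_pow_div_factorial ‖z‖).mul_right _)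
    fun j => norm_inv_factorial_add_succ_smul_pow_le z j k

theorem summable_expDerivCoeff_terms (z h : 𝔸) :
    Summable fun p : ℕ × ℕ => ((p.2 + p.1 + 1)! : ℝ)⁻¹ • z ^ p.2 * h * z ^ p.1 := by
  refine .of_norm_bounded (((Real.summable_pow_div_factorial ‖z‖).mul_left ‖h‖).mul_of_nonneg
    (Real.summable_pow_div_factorial ‖z‖) (fun _ => by positivity) fun _ => by positivity)
    fun ⟨k, j⟩ => ?_
  calc ‖((j + k + 1)! : ℝ)⁻¹ • z ^ j * h * z ^ k‖
      ≤ ‖z‖ ^ j / j ! * (k ! : ℝ)⁻¹ * ‖h‖ * ‖z‖ ^ k := by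
        refine (norm_mul₃_le ..).trans ?_
        gcongr
        · exact norm_inv_factorial_add_succ_smul_pow_le z j k
        · exact norm_pow_le z k
    _ = ‖h‖ * (‖z‖ ^ k / k !) * (‖z‖ ^ j / j !) := by ring

theorem tsum_expDerivCoeff_mul_mul_pow (z h : 𝔸) :
    ∑' k, expDerivCoeff z k * h * z ^ k =
      ∑' n, (n ! : ℝ)⁻¹ • ∑ i ∈ range n, z ^ (n.pred - i) * h * z ^ i := by
  have hsum := summable_expDerivCoeff_terms z h
  have hfiber (k : ℕ) : expDerivCoeff z k * h * z ^ k =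
      ∑' j, ((j + k + 1)! : ℝ)⁻¹ • z ^ j * h * z ^ k := by
    rw [expDerivCoeff, ← (summable_inv_factorial_add_succ_smul_pow z k).tsum_mul_right,
      ← ((summable_inv_factorial_add_succ_smul_pow z k).mul_right h).tsum_mul_right]
  have hdiag (n : ℕ) : ∑ p ∈ antidiagonal n, ((p.2 + p.1 + 1)! : ℝ)⁻¹ • z ^ p.2 * h * z ^ p.1 =
      ((n + 1)! : ℝ)⁻¹ • ∑ i ∈ range (n + 1), z ^ (n - i) * h * z ^ i := by
    rw [Nat.sum_antidiagonal_eq_sum_range_succ_mk, smul_sum]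
    refine sum_congr rfl fun i hi => ?_
    rw [Nat.sub_add_cancel (Nat.lt_succ_iff.mp (mem_range.mp hi)), smul_mul_assoc, smul_mul_assoc]
  simp_rw [hfiber]
  rw [← hsum.tsum_prod' hsum.prod_factor, hsum.tsum_eq_tsum_sum_antidiagonal]
  simp_rw [hdiag]
  refine Nat.succ_injective.tsum_eq
    (f := fun n => (n ! : ℝ)⁻¹ • ∑ i ∈ range n, z ^ (n.pred - i) * h * z ^ i) fun n hn => ?_
  have hn0 : n ≠ 0 := by rintro rfl; simp at hn
  exact ⟨n - 1, Nat.succ_pred_eq_of_ne_zero hn0⟩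

theorem summable_expSeriesTermFDeriv (z : 𝔸) : Summable (expSeriesTermFDeriv z) :=
  .of_norm_bounded (Real.summable_pow_div_factorial _)
    (norm_expSeriesTermFDeriv_le (le_add_of_nonneg_left (norm_nonneg z))
      (le_add_of_nonneg_right zero_le_one))

theorem hasFDerivAt_tsum_inv_factorial_smul_pow (z : 𝔸) :
    HasFDerivAt (fun w : 𝔸 => ∑' n, (n ! : ℝ)⁻¹ • w ^ n) (∑' n, expSeriesTermFDeriv z n) z := by
  have hz : z ∈ Metric.ball 0 (‖z‖ + 1) := mem_ball_zero_iff.mpr (lt_add_one _)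
  exact hasFDerivAt_tsum_of_isPreconnected (f := fun n (w : 𝔸) => (n ! : ℝ)⁻¹ • w ^ n)
    (f' := fun n (w : 𝔸) => expSeriesTermFDeriv w n)
    (Real.summable_pow_div_factorial (2 * (‖z‖ + 1))) Metric.isOpen_ball
    (convex_ball _ _).isPreconnected (fun n w _ => hasFDerivAt_inv_factorial_smul_pow w n)
    (fun n w hw => norm_expSeriesTermFDeriv_le (le_add_of_nonneg_left (norm_nonneg z))
      (mem_ball_zero_iff.mp hw).le n) hz
    (.of_norm_bounded (Real.summable_pow_div_factorial ‖z‖)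
      fun n => norm_inv_factorial_smul_pow_le n z) hz

theorem tsum_expSeriesTermFDeriv_apply (z h : 𝔸) :
    (∑' n, expSeriesTermFDeriv z n) h = ∑' k, expDerivCoeff z k * h * z ^ k := by
  rw [tsum_expDerivCoeff_mul_mul_pow]
  simp_rw [← expSeriesTermFDeriv_apply, ← ContinuousLinearMap.apply_apply h]
  exact (ContinuousLinearMap.apply ℝ 𝔸 h).map_tsum (summable_expSeriesTermFDeriv z)

end

/-- The increment of the quaternionic exponential admits the expansion
`qexp (z + h) - qexp z = ∑' k, c k * h * z^k + o(‖h‖)` where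
`c k = ∑' j, z^j / (j+k+1)!`, with `∑' k, ‖c k‖ * ‖z^k‖ < ∞`; hence `qexp` is
H-differentiable at `z` with witness sequences `A k = c k`, `B k = z^k`. -/
theorem qexp_increment_expansion (z : ℍ[ℝ]) :
    (Summable fun k : ℕ =>
      ‖∑' j : ℕ, (((j + k + 1).factorial : ℝ)⁻¹) • z ^ j‖ * ‖z ^ k‖) ∧
    Filter.Tendsto
      (fun h : ℍ[ℝ] =>
        ‖qexp (z + h) - qexp z -
            ∑' k : ℕ, (∑' j : ℕ, (((j + k + 1).factorial : ℝ)⁻¹) • z ^ j) * h * z ^ k‖ / ‖h‖)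
      (𝓝[≠] (0 : ℍ[ℝ])) (𝓝 0) ∧
    HDiffAt qexp z
      (∑' k : ℕ, (∑' j : ℕ, (((j + k + 1).factorial : ℝ)⁻¹) • z ^ j) * z ^ k) := by
  have hsmall := (hasFDerivAt_iff_isLittleO_nhds_zero.mp
    (hasFDerivAt_tsum_inv_factorial_smul_pow z)).norm_norm.tendsto_div_nhds_zero
  simp only [tsum_expSeriesTermFDeriv_apply] at hsmall
  have htendsto := hsmall.mono_left (nhdsWithin_le_nhds (s := {0}ᶜ))
  exact ⟨summable_norm_expDerivCoeff_mul_norm_pow z, htendsto,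
    _, _, summable_norm_expDerivCoeff_mul_norm_pow z, htendsto, rfl⟩
end

section
/- The quaternionic cosine function cos : ℍ → ℍ is H-differentiable at every point z ∈ ℍ with H-derivative −sin z. -/
open scoped Quaternion
open Filter Topology

/-- The quaternionic sine, defined by its power series. -/
noncomputable def qsin (z : ℍ[ℝ]) : ℍ[ℝ] :=
  ∑' n : ℕ, ((-1 : ℝ) ^ n / (2 * n + 1).factorial) • z ^ (2 * n + 1)

/-- The quaternionic cosine, defined by its power series. -/
noncomputable def qcos (z : ℍ[ℝ]) : ℍ[ℝ] :=
  ∑' n : ℕ, ((-1 : ℝ) ^ n / (2 * n).factorial) • z ^ (2 * n)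

/-!
Write `cos z = ∑ cₙ zⁿ` with `cₙ` the (real) Taylor coefficients of the cosine. In any Banach
algebra the Fréchet derivative of `w ↦ wⁿ` at `z` is `h ↦ ∑_{i+j=n-1} zⁱ h zʲ`, and for an entire
series termwise differentiation is legitimate, so `cos` has Fréchet derivative
`h ↦ ∑_{i,j} c_{i+j+1} zⁱ h zʲ` at `z`. This is an H-derivative with `A (i,j) = c_{i+j+1} zⁱ`,
`B (i,j) = zʲ`: `∑ ‖A‖ ‖B‖` is dominated by `∑ (n+1) |c_{n+1}| ‖z‖ⁿ < ∞`, and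
`∑ A B = ∑ (n+1) c_{n+1} zⁿ`, the termwise derivative of the cosine series, which is `-sin z`.
-/

section Antidiagonal

open Finset

theorem tsum_prod_eq_tsum_sum_antidiagonal {E : Type*} [NormedAddCommGroup E] [CompleteSpace E]
    {F : ℕ × ℕ → E} (hF : Summable F) : ∑' p, F p = ∑' n, ∑ p ∈ antidiagonal n, F p := by
  have hσ := (HasAntidiagonal.sigmaAntidiagonalEquivProd.summable_iff.mpr hF).tsum_sigma
  rw [← HasAntidiagonal.sigmaAntidiagonalEquivProd.tsum_eq]
  refine hσ.trans (tsum_congr fun n => ?_)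
  rw [tsum_fintype]
  exact sum_coe_sort (antidiagonal n) F

theorem summable_prod_of_summable_sum_antidiagonal {F : ℕ × ℕ → ℝ} (hF : ∀ p, 0 ≤ F p)
    (h : Summable fun n => ∑ p ∈ antidiagonal n, F p) : Summable F := by
  rw [← HasAntidiagonal.sigmaAntidiagonalEquivProd.summable_iff]
  refine (summable_sigma_of_nonneg fun _ => hF _).mpr ⟨fun n => Summable.of_finite, ?_⟩
  refine h.congr fun n => ?_
  rw [tsum_fintype]
  exact (sum_coe_sort (antidiagonal n) F).symm

theorem sum_antidiagonal_fst_add_snd {M : Type*} [AddCommMonoid M] (f : ℕ → M) (n : ℕ) :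
    ∑ p ∈ antidiagonal n, f (p.1 + p.2) = (n + 1) • f n := by
  rw [← Nat.sum_antidiagonal_subst (f := fun _ m => f m), sum_const, Nat.card_antidiagonal]

end Antidiagonal

section Parity

variable {M : Type*} [AddCommMonoid M] [TopologicalSpace M] {f : ℕ → M}

theorem tsum_eq_tsum_two_mul_of_odd (hf : ∀ n, Odd n → f n = 0) :
    ∑' n, f n = ∑' m, f (2 * m) := by
  refine ((Function.Injective.tsum_eq (fun a b h => by omega)) fun n hn => ?_).symm
  obtain ⟨m, rfl⟩ := Nat.not_odd_iff_even.mp fun h => hn (hf n h)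
  exact ⟨m, two_mul m⟩

theorem tsum_eq_tsum_two_mul_add_one_of_even (hf : ∀ n, Even n → f n = 0) :
    ∑' n, f n = ∑' m, f (2 * m + 1) := by
  refine ((Function.Injective.tsum_eq (fun a b h => by omega)) fun n hn => ?_).symm
  obtain ⟨m, rfl⟩ := Nat.not_even_iff_odd.mp fun h => hn (hf n h)
  exact ⟨m, rfl⟩

end Parity

section PowerFDeriv

open scoped RightActions

variable {𝔸 : Type*} [NormedRing 𝔸] [NormedAlgebra ℝ 𝔸]

noncomputable def powFDeriv (n : ℕ) (z : 𝔸) : 𝔸 →L[ℝ] 𝔸 :=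
  ∑ i ∈ Finset.range n, z ^ (n - 1 - i) •> ContinuousLinearMap.id ℝ 𝔸 <• z ^ i

theorem hasFDerivAt_pow_powFDeriv (n : ℕ) (z : 𝔸) :
    HasFDerivAt (fun w => w ^ n) (powFDeriv n z) z :=
  hasFDerivAt_pow' n

theorem powFDeriv_apply (n : ℕ) (z h : 𝔸) :
    powFDeriv n z h = ∑ i ∈ Finset.range n, z ^ (n - 1 - i) * h * z ^ i := by
  simp [powFDeriv]

theorem norm_powFDeriv_le [NormOneClass 𝔸] (n : ℕ) (z : 𝔸) :
    ‖powFDeriv n z‖ ≤ n * ‖z‖ ^ (n - 1) := by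
  refine ContinuousLinearMap.opNorm_le_bound _ (by positivity) fun h => ?_
  rw [powFDeriv_apply]
  calc ‖∑ i ∈ Finset.range n, z ^ (n - 1 - i) * h * z ^ i‖
      ≤ ∑ i ∈ Finset.range n, ‖z‖ ^ (n - 1) * ‖h‖ := by
        refine (norm_sum_le _ _).trans (Finset.sum_le_sum fun i hi => ?_)
        have hi : n - 1 - i + i = n - 1 := by have := Finset.mem_range.mp hi; omega
        calc ‖z ^ (n - 1 - i) * h * z ^ i‖ ≤ ‖z‖ ^ (n - 1 - i) * ‖h‖ * ‖z‖ ^ i := by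
              refine (norm_mul_le _ _).trans ?_
              gcongr
              · exact (norm_mul_le _ _).trans (by gcongr; exact norm_pow_le _ _)
              · exact norm_pow_le _ _
          _ = ‖z‖ ^ (n - 1) * ‖h‖ := by rw [mul_right_comm, ← pow_add, hi]
    _ = n * ‖z‖ ^ (n - 1) * ‖h‖ := by simp [mul_assoc]

end PowerFDeriv

section EntireCoeff

variable {c : ℕ → ℝ}

theorem summable_succ_mul_abs_mul_pow (hc : ∀ r, Summable fun n => |c n| * r ^ n) {r : ℝ}
    (hr : 0 ≤ r) : Summable fun n : ℕ => |c (n + 1)| * ((n + 1) * r ^ n) := by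
  refine ((summable_nat_add_iff 1).mpr (hc (2 * (r + 1)))).of_nonneg_of_le
    (fun n => by positivity) fun n => ?_
  have hn : (n + 1 : ℝ) ≤ 2 ^ (n + 1) := by exact_mod_cast (Nat.lt_two_pow_self).le
  have hr' : r ^ n ≤ (r + 1) ^ (n + 1) :=
    (pow_le_pow_left₀ hr (by linarith) n).trans (pow_le_pow_right₀ (by linarith) n.le_succ)
  calc |c (n + 1)| * ((n + 1) * r ^ n)
    _ ≤ |c (n + 1)| * (2 ^ (n + 1) * (r + 1) ^ (n + 1)) := by gcongr
    _ = |c (n + 1)| * (2 * (r + 1)) ^ (n + 1) := by rw [mul_pow]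

theorem summable_mul_abs_mul_pow_pred (hc : ∀ r, Summable fun n => |c n| * r ^ n) {r : ℝ}
    (hr : 0 ≤ r) : Summable fun n : ℕ => |c n| * (n * r ^ (n - 1)) := by
  rw [← summable_nat_add_iff 1]
  simpa using summable_succ_mul_abs_mul_pow hc hr

end EntireCoeff

section PowerSeries

variable {𝔸 : Type*} [NormedRing 𝔸] [NormedAlgebra ℝ 𝔸] [NormOneClass 𝔸] {c : ℕ → ℝ}

theorem summable_smul_powFDeriv [CompleteSpace 𝔸] (hc : ∀ r, Summable fun n => |c n| * r ^ n)
    (z : 𝔸) :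
    Summable fun n => c n • powFDeriv n z :=
  (summable_mul_abs_mul_pow_pred hc (norm_nonneg z)).of_norm_bounded fun n => by
    rw [norm_smul, Real.norm_eq_abs]
    exact mul_le_mul_of_nonneg_left (norm_powFDeriv_le n z) (abs_nonneg _)

theorem hasFDerivAt_tsum_smul_pow [CompleteSpace 𝔸] (hc : ∀ r, Summable fun n => |c n| * r ^ n)
    (z : 𝔸) :
    HasFDerivAt (fun w => ∑' n, c n • w ^ n) (∑' n, c n • powFDeriv n z) z := by
  have hz : z ∈ Metric.ball (0 : 𝔸) (‖z‖ + 1) := by simp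
  refine hasFDerivAt_tsum_of_isPreconnected
    (summable_mul_abs_mul_pow_pred hc (by positivity : 0 ≤ ‖z‖ + 1)) Metric.isOpen_ball
    (convex_ball _ _).isPreconnected (fun n w _ => (hasFDerivAt_pow_powFDeriv n w).const_smul (c n))
    (fun n w hw => ?_) hz ?_ hz
  · rw [mem_ball_zero_iff] at hw
    refine (norm_smul_le _ _).trans ?_
    rw [Real.norm_eq_abs]
    gcongr
    exact (norm_powFDeriv_le n w).trans (by gcongr)
  · refine (hc ‖z‖).of_norm_bounded fun n => (norm_smul_le _ _).trans ?_
    rw [Real.norm_eq_abs]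
    gcongr
    exact norm_pow_le _ _

theorem summable_norm_mul_norm_pair (hc : ∀ r, Summable fun n => |c n| * r ^ n) (z : 𝔸) :
    Summable fun p : ℕ × ℕ => ‖c (p.1 + p.2 + 1) • z ^ p.1‖ * ‖z ^ p.2‖ := by
  have hg : Summable fun p : ℕ × ℕ => |c (p.1 + p.2 + 1)| * ‖z‖ ^ (p.1 + p.2) := by
    refine summable_prod_of_summable_sum_antidiagonal (fun p => by positivity) ?_
    refine (summable_succ_mul_abs_mul_pow hc (norm_nonneg z)).congr fun n => ?_
    rw [sum_antidiagonal_fst_add_snd (fun m => |c (m + 1)| * ‖z‖ ^ m), nsmul_eq_mul]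
    push_cast; ring
  refine hg.of_nonneg_of_le (fun p => by positivity) fun p => ?_
  rw [norm_smul, Real.norm_eq_abs, pow_add, mul_assoc]
  gcongr <;> exact norm_pow_le _ _

theorem summable_smul_pow_mul_mul_pow_pair [CompleteSpace 𝔸]
    (hc : ∀ r, Summable fun n => |c n| * r ^ n) (z h : 𝔸) :
    Summable fun p : ℕ × ℕ => c (p.1 + p.2 + 1) • z ^ p.1 * h * z ^ p.2 := by
  refine ((summable_norm_mul_norm_pair hc z).mul_right ‖h‖).of_norm_bounded fun p => ?_
  refine (norm_mul_le _ _).trans ?_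
  rw [mul_right_comm]
  gcongr
  exact norm_mul_le _ _

theorem tsum_smul_powFDeriv_apply [CompleteSpace 𝔸] (hc : ∀ r, Summable fun n => |c n| * r ^ n)
    (z h : 𝔸) :
    (∑' n, c n • powFDeriv n z) h = ∑' p : ℕ × ℕ, c (p.1 + p.2 + 1) • z ^ p.1 * h * z ^ p.2 := by
  have hs := (ContinuousLinearMap.apply ℝ 𝔸 h).summable (summable_smul_powFDeriv hc z)
  have hmap := (ContinuousLinearMap.apply ℝ 𝔸 h).map_tsum (summable_smul_powFDeriv hc z)
  rw [ContinuousLinearMap.apply_apply] at hmap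
  rw [hmap, hs.tsum_eq_zero_add,
    tsum_prod_eq_tsum_sum_antidiagonal (summable_smul_pow_mul_mul_pow_pair hc z h)]
  simp only [ContinuousLinearMap.apply_apply, smul_apply,
    powFDeriv_apply, Finset.range_zero, Finset.sum_empty, smul_zero, zero_add]
  refine tsum_congr fun n => ?_
  rw [← Finset.Nat.sum_antidiagonal_swap, Finset.Nat.sum_antidiagonal_eq_sum_range_succ_mk,
    Finset.smul_sum]
  refine Finset.sum_congr rfl fun i hi => ?_
  have hi : n - i + i = n := by have := Finset.mem_range.mp hi; omega
  simp only [Prod.swap_prod_mk, hi, add_tsub_cancel_right, smul_mul_assoc]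

theorem tsum_smul_pow_mul_one_mul_pow_pair [CompleteSpace 𝔸]
    (hc : ∀ r, Summable fun n => |c n| * r ^ n) (z : 𝔸) :
    ∑' p : ℕ × ℕ, c (p.1 + p.2 + 1) • z ^ p.1 * 1 * z ^ p.2 =
      ∑' n : ℕ, ((n + 1) * c (n + 1)) • z ^ n := by
  rw [tsum_prod_eq_tsum_sum_antidiagonal (summable_smul_pow_mul_mul_pow_pair hc z 1)]
  refine tsum_congr fun n => ?_
  simp only [mul_one, smul_mul_assoc, ← pow_add]
  rw [sum_antidiagonal_fst_add_snd (fun m => c (m + 1) • z ^ m), ← Nat.cast_smul_eq_nsmul ℝ,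
    smul_smul]
  push_cast
  rfl

end PowerSeries

theorem hDiffAt_of_hasFDerivAt {f : ℍ[ℝ] → ℍ[ℝ]} {z : ℍ[ℝ]} {L : ℍ[ℝ] →L[ℝ] ℍ[ℝ]}
    (hf : HasFDerivAt f L z) {ι : Type*} (e : ℕ ≃ ι) {A B : ι → ℍ[ℝ]}
    (hAB : Summable fun k => ‖A k‖ * ‖B k‖) (hL : ∀ h, L h = ∑' k, A k * h * B k) :
    HDiffAt f z (L 1) := by
  refine ⟨A ∘ e, B ∘ e, e.summable_iff.mpr hAB, ?_, ?_⟩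
  · have hLe : ∀ h, ∑' k, (A ∘ e) k * h * (B ∘ e) k = L h := fun h => by
      rw [hL, ← e.tsum_eq]; rfl
    simp only [hLe]
    exact ((hasFDerivAt_iff_isLittleO_nhds_zero.mp hf).norm_norm.tendsto_div_nhds_zero).mono_left
      nhdsWithin_le_nhds
  · simp [hL, e.tsum_eq fun k => A k * B k]

theorem hDiffAt_tsum_smul_pow {c : ℕ → ℝ} (hc : ∀ r, Summable fun n => |c n| * r ^ n)
    (z : ℍ[ℝ]) :
    HDiffAt (fun w => ∑' n, c n • w ^ n) z (∑' n : ℕ, ((n + 1) * c (n + 1)) • z ^ n) := by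
  have h := hDiffAt_of_hasFDerivAt (hasFDerivAt_tsum_smul_pow hc z) Nat.pairEquiv.symm
    (summable_norm_mul_norm_pair hc z) (tsum_smul_powFDeriv_apply hc z)
  rwa [tsum_smul_powFDeriv_apply hc, tsum_smul_pow_mul_one_mul_pow_pair hc] at h

noncomputable def cosCoeff (n : ℕ) : ℝ :=
  if Even n then (-1) ^ (n / 2) / n.factorial else 0

theorem cosCoeff_two_mul (m : ℕ) : cosCoeff (2 * m) = (-1) ^ m / (2 * m).factorial := by
  simp [cosCoeff]

theorem cosCoeff_of_odd {n : ℕ} (hn : Odd n) : cosCoeff n = 0 := by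
  simp [cosCoeff, Nat.not_even_iff_odd.mpr hn]

theorem abs_cosCoeff_le (n : ℕ) : |cosCoeff n| ≤ 1 / n.factorial := by
  unfold cosCoeff
  split_ifs
  · simp [abs_div]
  · simp only [abs_zero]; positivity

theorem summable_abs_cosCoeff_mul_pow (r : ℝ) : Summable fun n => |cosCoeff n| * r ^ n := by
  refine (Real.summable_pow_div_factorial |r|).of_norm_bounded fun n => ?_
  rw [norm_mul, norm_pow, Real.norm_eq_abs, abs_abs, Real.norm_eq_abs]
  calc |cosCoeff n| * |r| ^ n ≤ 1 / n.factorial * |r| ^ n := by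
        gcongr; exact abs_cosCoeff_le n
    _ = |r| ^ n / n.factorial := by ring

theorem qcos_eq_tsum : qcos = fun w => ∑' n, cosCoeff n • w ^ n := by
  funext w
  rw [qcos, tsum_eq_tsum_two_mul_of_odd (f := fun n => cosCoeff n • w ^ n) fun n hn => by
    simp [cosCoeff_of_odd hn]]
  simp only [cosCoeff_two_mul]

theorem tsum_succ_mul_cosCoeff_smul_pow (z : ℍ[ℝ]) :
    ∑' n : ℕ, ((n + 1) * cosCoeff (n + 1)) • z ^ n = -qsin z := by
  rw [qsin, ← tsum_neg, tsum_eq_tsum_two_mul_add_one_of_even fun n hn => by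
    simp [cosCoeff_of_odd hn.add_one]]
  refine tsum_congr fun m => ?_
  rw [← neg_smul, show cosCoeff (2 * m + 1 + 1) = (-1) ^ (m + 1) / (2 * m + 1 + 1).factorial from
    cosCoeff_two_mul (m + 1), Nat.factorial_succ (2 * m + 1)]
  congr 1
  push_cast
  field_simp
  ring

/-- The quaternionic cosine is H-differentiable at every point with H-derivative minus the sine. -/
theorem hDiffAt_qcos (z : ℍ[ℝ]) : HDiffAt qcos z (-qsin z) := by
  rw [qcos_eq_tsum, ← tsum_succ_mul_cosCoeff_smul_pow]
  exact hDiffAt_tsum_smul_pow summable_abs_cosCoeff_mul_pow z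
end

section
/- If f : ℍ → ℍ is H-differentiable at z⁰ ∈ ℍ with H-derivative d, then for every natural number n ≥ 1 the function z ↦ (f(z))^n is H-differentiable at z⁰ with H-derivative ∑_{j=0}^{n−1} (f(z⁰))^{n−1−j} · d · (f(z⁰))^j. -/
open scoped Quaternion
open Filter Topology

/-!
An H-differentiable function is exactly a Fréchet differentiable one whose derivative is a
norm-convergent sum of sandwiches `h ↦ A k * h * B k`; the H-derivative is the value of that
derivative at `1`. Sandwich maps form an additive monoid stable under multiplication by constants
on either side, so the noncommutative power rule for Fréchet derivatives,
`D(fⁿ) = ∑ⱼ fⁿ⁻¹⁻ʲ • Df • fʲ`, again yields a sandwich map, and evaluating it at `1` gives the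
formula.
-/

open scoped RightActions
open Asymptotics

section Sandwich

variable {𝕜 R ι : Type*} [NontriviallyNormedField 𝕜] [NormedRing R] [NormedAlgebra 𝕜 R]
  {A B : ι → R}

theorem norm_tsum_mul_mul_le (hAB : Summable fun k => ‖A k‖ * ‖B k‖) (h : R) :
    ‖∑' k, A k * h * B k‖ ≤ (∑' k, ‖A k‖ * ‖B k‖) * ‖h‖ :=
  tsum_of_norm_bounded (hAB.hasSum.mul_right ‖h‖) fun k => norm_mul₃_le.trans_eq (by ring)

variable [CompleteSpace R]

theorem summable_mul_mul_of_summable_norm (hAB : Summable fun k => ‖A k‖ * ‖B k‖) (h : R) :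
    Summable fun k => A k * h * B k :=
  .of_norm_bounded (hAB.mul_right ‖h‖) fun k => norm_mul₃_le.trans_eq (by ring)

variable (𝕜) in
noncomputable def sandwichCLM (A B : ι → R) (hAB : Summable fun k => ‖A k‖ * ‖B k‖) :
    R →L[𝕜] R :=
  LinearMap.mkContinuous
    { toFun := fun h => ∑' k, A k * h * B k
      map_add' := fun x y => by
        simp only [mul_add, add_mul]
        exact (summable_mul_mul_of_summable_norm hAB x).tsum_add
          (summable_mul_mul_of_summable_norm hAB y)
      map_smul' := fun c x => by
        simp only [mul_smul_comm, smul_mul_assoc, RingHom.id_apply]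
        exact (summable_mul_mul_of_summable_norm hAB x).tsum_const_smul c }
    (∑' k, ‖A k‖ * ‖B k‖) (norm_tsum_mul_mul_le hAB)

@[simp]
theorem sandwichCLM_apply (hAB : Summable fun k => ‖A k‖ * ‖B k‖) (h : R) :
    sandwichCLM 𝕜 A B hAB h = ∑' k, A k * h * B k :=
  rfl

variable (𝕜 R) in
def sandwichMaps : AddSubmonoid (R →L[𝕜] R) where
  carrier := {L | ∃ A B : ℕ → R, (Summable fun k => ‖A k‖ * ‖B k‖) ∧
    ∀ h, L h = ∑' k, A k * h * B k}
  zero_mem' := ⟨0, 0, by simp [summable_zero], by simp⟩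
  add_mem' := by
    rintro L M ⟨A, B, hAB, hL⟩ ⟨P, Q, hPQ, hM⟩
    let e := Equiv.natSumNatEquivNat.symm
    let g i := ‖Sum.elim A P i‖ * ‖Sum.elim B Q i‖
    refine ⟨Sum.elim A P ∘ e, Sum.elim B Q ∘ e, (e.summable_iff (f := g)).mpr (.sum g hAB hPQ),
      fun h => ?_⟩
    let f i := Sum.elim A P i * h * Sum.elim B Q i
    calc (L + M) h = ∑' k, f (.inl k) + ∑' k, f (.inr k) := by rw [add_apply, hL, hM]; rfl
      _ = ∑' i, f i := (Summable.tsum_sum (f := f) (summable_mul_mul_of_summable_norm hAB h)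
          (summable_mul_mul_of_summable_norm hPQ h)).symm
      _ = ∑' k, f (e k) := (e.tsum_eq f).symm

theorem smul_mem_sandwichMaps {L : R →L[𝕜] R} (hL : L ∈ sandwichMaps 𝕜 R) (a : R) :
    a •> L ∈ sandwichMaps 𝕜 R := by
  obtain ⟨A, B, hAB, hL⟩ := hL
  refine ⟨(a * A ·), B, ?_, fun h => ?_⟩
  · exact .of_nonneg_of_le (fun k => by positivity)
      (fun k => mul_le_mul_of_nonneg_right (norm_mul_le _ _) (norm_nonneg _))
      ((hAB.mul_left ‖a‖).congr fun k => (mul_assoc _ _ _).symm)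
  · rw [smul_apply, hL, smul_eq_mul,
      ← (summable_mul_mul_of_summable_norm hAB h).tsum_mul_left]
    simp only [mul_assoc]

theorem op_smul_mem_sandwichMaps {L : R →L[𝕜] R} (hL : L ∈ sandwichMaps 𝕜 R) (b : R) :
    L <• b ∈ sandwichMaps 𝕜 R := by
  obtain ⟨A, B, hAB, hL⟩ := hL
  refine ⟨A, (B · * b), ?_, fun h => ?_⟩
  · exact .of_nonneg_of_le (fun k => by positivity)
      (fun k => mul_le_mul_of_nonneg_left (norm_mul_le _ _) (norm_nonneg _))
      ((hAB.mul_right ‖b‖).congr fun k => mul_assoc _ _ _)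
  · rw [smul_apply, hL, MulOpposite.smul_eq_mul_unop, MulOpposite.unop_op,
      ← (summable_mul_mul_of_summable_norm hAB h).tsum_mul_right]
    simp only [mul_assoc]

end Sandwich

theorem isLittleO_nhds_zero_iff_tendsto_norm_div_norm {E F : Type*} [NormedAddCommGroup E]
    [NormedAddCommGroup F] {u : E → F} (hu : u 0 = 0) :
    u =o[𝓝 0] (fun h => h) ↔ Tendsto (fun h => ‖u h‖ / ‖h‖) (𝓝[≠] 0) (𝓝 0) := by
  rw [← nhdsNE_sup_pure, isLittleO_sup, ← isLittleO_norm_norm, isLittleO_iff_tendsto']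
  · rw [isLittleO_pure]; simp [hu]
  · filter_upwards [self_mem_nhdsWithin] with h hh h0
    exact absurd (norm_eq_zero.mp h0) hh

theorem hDiffAt_iff_hasFDerivAt {f : ℍ[ℝ] → ℍ[ℝ]} {z₀ d : ℍ[ℝ]} :
    HDiffAt f z₀ d ↔ ∃ L ∈ sandwichMaps ℝ ℍ[ℝ], HasFDerivAt f L z₀ ∧ d = L 1 := by
  simp only [hasFDerivAt_iff_isLittleO_nhds_zero]
  constructor
  · rintro ⟨A, B, hAB, hf, rfl⟩
    refine ⟨sandwichCLM ℝ A B hAB, ⟨A, B, hAB, fun h => rfl⟩, ?_, by simp⟩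
    rwa [isLittleO_nhds_zero_iff_tendsto_norm_div_norm (by simp)]
  · rintro ⟨L, ⟨A, B, hAB, hL⟩, hf, rfl⟩
    refine ⟨A, B, hAB, ?_, by simp [hL]⟩
    simp only [hL] at hf
    rwa [isLittleO_nhds_zero_iff_tendsto_norm_div_norm (by simp)] at hf

theorem hDiffAt_pow_comp_general (f : ℍ[ℝ] → ℍ[ℝ]) (z₀ d : ℍ[ℝ]) (hf : HDiffAt f z₀ d)
    (n : ℕ) :
    HDiffAt (fun z => f z ^ n) z₀
      (∑ j ∈ Finset.range n, f z₀ ^ (n - 1 - j) * d * f z₀ ^ j) := by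
  obtain ⟨L, hL, hfL, rfl⟩ := hDiffAt_iff_hasFDerivAt.mp hf
  refine hDiffAt_iff_hasFDerivAt.mpr ⟨_, ?_, hfL.fun_pow' n, ?_⟩
  · exact sum_mem fun j _ => op_smul_mem_sandwichMaps (smul_mem_sandwichMaps hL _) _
  · simp

/-- Power rule for H-derivatives of `f^n`. -/
theorem hDiffAt_pow_comp (f : ℍ[ℝ] → ℍ[ℝ]) (z₀ d : ℍ[ℝ]) (hf : HDiffAt f z₀ d)
    (n : ℕ) (hn : 1 ≤ n) :
    HDiffAt (fun z => f z ^ n) z₀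
      (∑ j ∈ Finset.range n, f z₀ ^ (n - 1 - j) * d * f z₀ ^ j) :=
  hDiffAt_pow_comp_general f z₀ d hf n
end

section
/- Let φ : ℍ → ℍ be H-differentiable at z⁰ ∈ ℍ with H-derivative d, and suppose φ(z) ≠ 0 for all z in some neighborhood of z⁰. Then the function z ↦ (φ(z))⁻¹ is H-differentiable at z⁰ with H-derivative −(φ(z⁰))⁻¹ · d · (φ(z⁰))⁻¹. -/
/-!
The condition in `HDiffAt f z₀ d` says precisely that `f` has Fréchet derivative
`h ↦ ∑ₖ A k * h * B k` at `z₀`, the sum of a norm-convergent series of two-sided multiplication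
operators, and that `d` is the value of this derivative at `1`. Inversion has derivative
`t ↦ -p⁻¹ * t * p⁻¹` at `p ≠ 0`, so by the chain rule `z ↦ (φ z)⁻¹` has the derivative of the
same shape with coefficients `-p⁻¹ * A k` and `B k * p⁻¹`, where `p = φ z₀`.
-/

open scoped Quaternion
open Filter Topology

open Asymptotics ContinuousLinearMap

theorem Asymptotics.isLittleO_nhds_zero_id_iff_tendsto_norm_div {E F : Type*}
    [NormedAddCommGroup E] [NormedAddCommGroup F] {r : E → F} (hr : r 0 = 0) :
    r =o[𝓝 0] (fun h => h) ↔ Tendsto (fun h => ‖r h‖ / ‖h‖) (𝓝[≠] 0) (𝓝 0) := by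
  rw [← nhdsNE_sup_pure, isLittleO_sup, isLittleO_pure, and_iff_left hr, ← isLittleO_norm_norm]
  refine isLittleO_iff_tendsto' ?_
  filter_upwards [self_mem_nhdsWithin] with h hh hh0
  exact absurd (norm_eq_zero.1 hh0) hh

theorem Summable.norm_mul_left_mul_norm_mul_right {R ι : Type*} [NonUnitalSeminormedRing R]
    {A B : ι → R} (hAB : Summable fun k => ‖A k‖ * ‖B k‖) (a b : R) :
    Summable fun k => ‖a * A k‖ * ‖B k * b‖ := by
  refine (hAB.mul_left (‖a‖ * ‖b‖)).of_nonneg_of_le (fun k => by positivity) fun k => ?_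
  calc ‖a * A k‖ * ‖B k * b‖ ≤ (‖a‖ * ‖A k‖) * (‖B k‖ * ‖b‖) := by
        gcongr <;> exact norm_mul_le _ _
    _ = ‖a‖ * ‖b‖ * (‖A k‖ * ‖B k‖) := by ring

section TsumMulLeftRight

variable (𝕜 : Type*) {R ι : Type*} [NontriviallyNormedField 𝕜] [NonUnitalNormedRing R]
  [NormedSpace 𝕜 R] [IsScalarTower 𝕜 R R] [SMulCommClass 𝕜 R R]

noncomputable def tsumMulLeftRight (A B : ι → R) : R →L[𝕜] R :=
  ∑' k, mulLeftRight 𝕜 R (A k) (B k)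

variable {𝕜} {A B : ι → R} [CompleteSpace R]

theorem Summable.mulLeftRight (hAB : Summable fun k => ‖A k‖ * ‖B k‖) :
    Summable fun k => mulLeftRight 𝕜 R (A k) (B k) :=
  .of_norm_bounded hAB fun _ => opNorm_mulLeftRight_apply_apply_le 𝕜 R _ _

theorem tsumMulLeftRight_apply (hAB : Summable fun k => ‖A k‖ * ‖B k‖) (h : R) :
    tsumMulLeftRight 𝕜 A B h = ∑' k, A k * h * B k :=
  (apply 𝕜 R h).map_tsum hAB.mulLeftRight

theorem mulLeftRight_comp_tsumMulLeftRight (hAB : Summable fun k => ‖A k‖ * ‖B k‖) (a b : R) :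
    mulLeftRight 𝕜 R a b ∘L tsumMulLeftRight 𝕜 A B =
      tsumMulLeftRight 𝕜 (fun k => a * A k) (fun k => B k * b) := by
  rw [tsumMulLeftRight, ← compL_apply, (compL 𝕜 R R R _).map_tsum hAB.mulLeftRight]
  congr 1
  ext : 2
  simp [mul_assoc]

end TsumMulLeftRight

theorem hDiffAt_iff_hasFDerivAt_s13 {f : ℍ[ℝ] → ℍ[ℝ]} {z₀ d : ℍ[ℝ]} :
    HDiffAt f z₀ d ↔ ∃ A B : ℕ → ℍ[ℝ], (Summable fun k => ‖A k‖ * ‖B k‖) ∧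
      HasFDerivAt f (tsumMulLeftRight ℝ A B) z₀ ∧ d = tsumMulLeftRight ℝ A B 1 := by
  refine exists₂_congr fun A B => and_congr_right fun hAB => ?_
  rw [hasFDerivAt_iff_isLittleO_nhds_zero,
    isLittleO_nhds_zero_id_iff_tendsto_norm_div (by simp)]
  simp only [tsumMulLeftRight_apply hAB, mul_one]

/-- H-derivative of the reciprocal of a nonvanishing H-differentiable function. -/
theorem hDiffAt_inv_comp (φ : ℍ[ℝ] → ℍ[ℝ]) (z₀ d : ℍ[ℝ]) (hφ : HDiffAt φ z₀ d)
    (hne : ∀ᶠ z in 𝓝 z₀, φ z ≠ 0) :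
    HDiffAt (fun z => (φ z)⁻¹) z₀ (-((φ z₀)⁻¹ * d * (φ z₀)⁻¹)) := by
  obtain ⟨A, B, hAB, hφA, rfl⟩ := hDiffAt_iff_hasFDerivAt_s13.1 hφ
  have hinv := (hasFDerivAt_inv' (𝕜 := ℝ) hne.self_of_nhds).comp z₀ hφA
  set c := (φ z₀)⁻¹
  have hL : (-mulLeftRight ℝ ℍ[ℝ] c c) ∘L tsumMulLeftRight ℝ A B =
      tsumMulLeftRight ℝ (fun k => -c * A k) (fun k => B k * c) := by
    rw [← mulLeftRight_comp_tsumMulLeftRight hAB, map_neg, neg_apply]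
  rw [hL] at hinv
  refine hDiffAt_iff_hasFDerivAt_s13.2
    ⟨_, _, hAB.norm_mul_left_mul_norm_mul_right (-c) c, hinv, ?_⟩
  rw [← hL]
  simp
end

section
/- For every negative integer m (m = −1, −2, …) and every z ∈ ℍ with z ≠ 0, the function z ↦ z^m (integer power, i.e. z^m = (z^{−m})⁻¹) is H-differentiable at z with H-derivative m · z^{m−1}. -/
open scoped Quaternion
open Filter Topology

/-!
Writing `m = -n`, the map `w ↦ w ^ m` is `w ↦ (w⁻¹) ^ n`. The product rule for powers in a
noncommutative algebra, composed with the derivative `h ↦ -z⁻¹ * h * z⁻¹` of inversion, gives the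
Fréchet derivative `h ↦ ∑_{i < n} -z⁻¹ ^ (n - i) * h * z⁻¹ ^ (i + 1)`. A Fréchet derivative that
is a finite sum of two-sided multiplications `h ↦ a i * h * b i` is an H-derivative, with
`A`, `B` supported on finitely many indices, and `∑ a i * b i = -n * z ^ (-n - 1)`.
-/

open ContinuousLinearMap Finset

theorem hasFDerivAt_inv_pow {𝕜 R : Type*} [NontriviallyNormedField 𝕜] [NormedDivisionRing R]
    [NormedAlgebra 𝕜 R] (n : ℕ) {z : R} (hz : z ≠ 0) :
    HasFDerivAt (fun w => w⁻¹ ^ n)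
      (∑ i ∈ range n, mulLeftRight 𝕜 R (-z⁻¹ ^ (n - i)) (z⁻¹ ^ (i + 1))) z := by
  refine ((hasFDerivAt_inv' hz).pow' n).congr_fderiv (sum_congr rfl fun i hi => ?_)
  have hexp : n - i = n.pred - i + 1 := by
    have := mem_range.mp hi; simp only [Nat.pred_eq_sub_one]; omega
  ext h
  simp only [hexp, pow_succ, pow_succ' z⁻¹ i, smul_apply, neg_apply, mulLeftRight_apply,
    smul_eq_mul, MulOpposite.smul_eq_mul_unop, MulOpposite.unop_op]
  noncomm_ring

theorem hDiffAt_of_hasFDerivAt_s14 {f : ℍ[ℝ] → ℍ[ℝ]} {z : ℍ[ℝ]} {s : Finset ℕ} {a b : ℕ → ℍ[ℝ]}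
    (hf : HasFDerivAt f (∑ i ∈ s, mulLeftRight ℝ ℍ[ℝ] (a i) (b i)) z) :
    HDiffAt f z (∑ i ∈ s, a i * b i) := by
  set A : ℕ → ℍ[ℝ] := fun k => if k ∈ s then a k else 0
  have hA : ∀ k ∉ s, A k = 0 := fun k hk => if_neg hk
  have hsum (h : ℍ[ℝ]) : ∑' k, A k * h * b k = ∑ i ∈ s, a i * h * b i := by
    rw [tsum_eq_sum (s := s) fun k hk => by simp [hA k hk]]
    exact sum_congr rfl fun k hk => by simp [A, hk]
  refine ⟨A, b, summable_of_ne_finset_zero (s := s) fun k hk => by simp [hA k hk], ?_, ?_⟩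
  · have := (hasFDerivAt_iff_isLittleO_nhds_zero.mp hf).norm_norm
    rw [Asymptotics.isLittleO_iff_tendsto (by simp)] at this
    refine (this.mono_left nhdsWithin_le_nhds).congr fun h => ?_
    simp [hsum]
  · simpa using (hsum 1).symm

theorem sum_range_neg_inv_pow_mul_inv_pow {R : Type*} [DivisionRing R] (n : ℕ) (z : R) :
    ∑ i ∈ range n, -z⁻¹ ^ (n - i) * z⁻¹ ^ (i + 1) = (-n : ℤ) * z ^ (-(n : ℤ) - 1) := by
  have hterm : ∀ i ∈ range n, -z⁻¹ ^ (n - i) * z⁻¹ ^ (i + 1) = -z⁻¹ ^ (n + 1) :=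
    fun i hi => by
      rw [neg_mul, ← pow_add, show n - i + (i + 1) = n + 1 by have := mem_range.mp hi; omega]
  rw [sum_congr rfl hterm, sum_const, card_range, nsmul_eq_mul,
    show -(n : ℤ) - 1 = -((n + 1 : ℕ) : ℤ) by push_cast; ring, zpow_neg, zpow_natCast, inv_pow]
  push_cast
  rw [mul_neg, neg_mul]

/-- For negative integers `m` and `z ≠ 0`, `z ↦ z^m` is H-differentiable at `z`
with H-derivative `m * z^(m-1)`. -/
theorem hDiffAt_zpow_neg (m : ℤ) (hm : m < 0) (z : ℍ[ℝ]) (hz : z ≠ 0) :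
    HDiffAt (fun w => w ^ m) z ((m : ℍ[ℝ]) * z ^ (m - 1)) := by
  obtain ⟨n, rfl⟩ : ∃ n : ℕ, m = -n := ⟨m.natAbs, by omega⟩
  have hpow : (fun w : ℍ[ℝ] => w ^ (-(n : ℤ))) = fun w => w⁻¹ ^ n := by
    funext w; rw [zpow_neg, zpow_natCast, inv_pow]
  rw [hpow, ← sum_range_neg_inv_pow_mul_inv_pow]
  exact hDiffAt_of_hasFDerivAt_s14 (hasFDerivAt_inv_pow n hz)
end

section
/- Let f : ℍ → ℍ be H-differentiable at z⁰ ∈ ℍ with H-derivative d₁ and φ : ℍ → ℍ be H-differentiable at z⁰ with H-derivative d₂, with φ(z) ≠ 0 for all z in some neighborhood of z⁰. Then the function z ↦ f(z) · (φ(z))⁻¹ is H-differentiable at z⁰ with H-derivative d₁ · (φ(z⁰))⁻¹ − f(z⁰) · (φ(z⁰))⁻¹ · d₂ · (φ(z⁰))⁻¹. -/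
/-! An H-derivative is a Fréchet derivative `L` of the special form `L h = ∑ A k * h * B k`
with `∑ ‖A k‖ * ‖B k‖ < ∞`, and the H-derivative itself is `L 1`. Such sandwich series are
closed under sums (interleave the two pairs of sequences) and under multiplying by constants
on the left and right. The Fréchet derivatives of a product, `h ↦ f' h * g z₀ + f z₀ * g' h`,
and of the inverse, `h ↦ -(φ z₀)⁻¹ * φ' h * (φ z₀)⁻¹`, are built from those of the factors by
exactly these operations, so the product and inverse rules hold for H-derivatives, and the
quotient rule is their combination. -/

open scoped Quaternion
open Filter Topology

open Asymptotics ContinuousLinearMap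

section SandwichSeries

variable {R : Type*} [NonUnitalSeminormedRing R]

def IsSandwichSeries (L : R → R) : Prop :=
  ∃ A B : ℕ → R, (Summable fun k => ‖A k‖ * ‖B k‖) ∧ ∀ h, HasSum (fun k => A k * h * B k) (L h)

namespace IsSandwichSeries

variable {L L' : R → R}

theorem add (hL : IsSandwichSeries L) (hL' : IsSandwichSeries L') :
    IsSandwichSeries (L + L') := by
  obtain ⟨A, B, hs, hh⟩ := hL
  obtain ⟨A', B', hs', hh'⟩ := hL'
  let e := Equiv.natSumNatEquivNat.symm
  refine ⟨Sum.elim A A' ∘ e, Sum.elim B B' ∘ e, ?_, fun h => ?_⟩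
  · exact (e.summable_iff (f := fun i => ‖Sum.elim A A' i‖ * ‖Sum.elim B B' i‖)).mpr
      (.sum _ hs hs')
  · exact (e.hasSum_iff (f := fun i => Sum.elim A A' i * h * Sum.elim B B' i)).mpr
      ((hh h).sum (hh' h))

theorem mul_left_mul_right (hL : IsSandwichSeries L) (a c : R) :
    IsSandwichSeries fun h => a * L h * c := by
  obtain ⟨A, B, hs, hh⟩ := hL
  refine ⟨fun k => a * A k, fun k => B k * c, ?_, fun h => ?_⟩
  · refine .of_nonneg_of_le (fun _ => by positivity) (fun k => ?_) (hs.mul_left (‖a‖ * ‖c‖))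
    calc ‖a * A k‖ * ‖B k * c‖ ≤ (‖a‖ * ‖A k‖) * (‖B k‖ * ‖c‖) := by
          gcongr <;> exact norm_mul_le _ _
      _ = ‖a‖ * ‖c‖ * (‖A k‖ * ‖B k‖) := by ring
  · simpa only [mul_assoc] using ((hh h).mul_right c).mul_left a

end IsSandwichSeries

variable {𝕜 : Type*} [NontriviallyNormedField 𝕜] [NormedSpace 𝕜 R] [IsScalarTower 𝕜 R R]
  [SMulCommClass 𝕜 R R] [CompleteSpace R] {A B : ℕ → R}

theorem hasSum_mul_mul_tsum_mulLeftRight_apply (hs : Summable fun k => ‖A k‖ * ‖B k‖) (h : R) :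
    HasSum (fun k => A k * h * B k) ((∑' k, mulLeftRight 𝕜 R (A k) (B k)) h) := by
  have hL : Summable fun k => mulLeftRight 𝕜 R (A k) (B k) :=
    .of_norm_bounded hs fun k => opNorm_mulLeftRight_apply_apply_le 𝕜 R (A k) (B k)
  simpa only [apply_apply, mulLeftRight_apply] using (apply 𝕜 R h).hasSum hL.hasSum

theorem isSandwichSeries_tsum_mulLeftRight (hs : Summable fun k => ‖A k‖ * ‖B k‖) :
    IsSandwichSeries ⇑(∑' k, mulLeftRight 𝕜 R (A k) (B k)) :=
  ⟨A, B, hs, hasSum_mul_mul_tsum_mulLeftRight_apply hs⟩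

end SandwichSeries

theorem hasFDerivAt_iff_tendsto_div_norm {𝕜 E F : Type*} [NontriviallyNormedField 𝕜]
    [NormedAddCommGroup E] [NormedSpace 𝕜 E] [NormedAddCommGroup F] [NormedSpace 𝕜 F]
    {f : E → F} {L : E →L[𝕜] F} {x : E} :
    HasFDerivAt f L x ↔
      Tendsto (fun h => ‖f (x + h) - f x - L h‖ / ‖h‖) (𝓝[≠] 0) (𝓝 0) := by
  rw [hasFDerivAt_iff_isLittleO_nhds_zero, ← isLittleO_norm_norm,
    isLittleO_iff_tendsto fun h hh => by simp_all, ← nhdsNE_sup_pure, tendsto_sup,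
    and_iff_left]
  simpa using tendsto_pure_nhds (fun h => ‖f (x + h) - f x - L h‖ / ‖h‖) 0

theorem hDiffAt_iff_exists_hasFDerivAt {f : ℍ[ℝ] → ℍ[ℝ]} {z₀ d : ℍ[ℝ]} :
    HDiffAt f z₀ d ↔
      ∃ L : ℍ[ℝ] →L[ℝ] ℍ[ℝ], HasFDerivAt f L z₀ ∧ IsSandwichSeries L ∧ d = L 1 := by
  constructor
  · rintro ⟨A, B, hs, hlim, rfl⟩
    have hL h := (hasSum_mul_mul_tsum_mulLeftRight_apply (𝕜 := ℝ) hs h).tsum_eq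
    refine ⟨_, hasFDerivAt_iff_tendsto_div_norm.mpr ?_,
      isSandwichSeries_tsum_mulLeftRight hs, ?_⟩
    · simpa only [hL] using hlim
    · simpa only [mul_one] using hL 1
  · rintro ⟨L, hL, ⟨A, B, hs, hh⟩, rfl⟩
    have hL' h := (hh h).tsum_eq
    refine ⟨A, B, hs, ?_, ?_⟩
    · simpa only [hL'] using hasFDerivAt_iff_tendsto_div_norm.mp hL
    · simpa only [mul_one] using (hL' 1).symm

namespace HDiffAt

variable {f g : ℍ[ℝ] → ℍ[ℝ]} {z₀ d₁ d₂ : ℍ[ℝ]}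

theorem mul (hf : HDiffAt f z₀ d₁) (hg : HDiffAt g z₀ d₂) :
    HDiffAt (fun z => f z * g z) z₀ (d₁ * g z₀ + f z₀ * d₂) := by
  obtain ⟨L₁, hL₁, S₁, rfl⟩ := hDiffAt_iff_exists_hasFDerivAt.mp hf
  obtain ⟨L₂, hL₂, S₂, rfl⟩ := hDiffAt_iff_exists_hasFDerivAt.mp hg
  refine hDiffAt_iff_exists_hasFDerivAt.mpr ⟨_, hL₁.fun_mul' hL₂, ?_, by simp [add_comm]⟩
  convert (S₁.mul_left_mul_right 1 (g z₀)).add (S₂.mul_left_mul_right (f z₀) 1) using 1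
  funext h
  simp [add_comm]

theorem inv (hg : HDiffAt g z₀ d₂) (hg₀ : g z₀ ≠ 0) :
    HDiffAt (fun z => (g z)⁻¹) z₀ (-((g z₀)⁻¹ * d₂ * (g z₀)⁻¹)) := by
  obtain ⟨L, hL, S, rfl⟩ := hDiffAt_iff_exists_hasFDerivAt.mp hg
  refine hDiffAt_iff_exists_hasFDerivAt.mpr
    ⟨_, (hasFDerivAt_inv' hg₀).comp z₀ hL, ?_, by simp⟩
  convert S.mul_left_mul_right (-(g z₀)⁻¹) (g z₀)⁻¹ using 1
  funext h
  simp

end HDiffAt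

/-- Right-quotient rule for H-derivatives. -/
theorem hDiffAt_mul_inv (f φ : ℍ[ℝ] → ℍ[ℝ]) (z₀ d₁ d₂ : ℍ[ℝ])
    (hf : HDiffAt f z₀ d₁) (hφ : HDiffAt φ z₀ d₂) (hne : ∀ᶠ z in 𝓝 z₀, φ z ≠ 0) :
    HDiffAt (fun z => f z * (φ z)⁻¹) z₀
      (d₁ * (φ z₀)⁻¹ - f z₀ * (φ z₀)⁻¹ * d₂ * (φ z₀)⁻¹) := by
  convert hf.mul (hφ.inv hne.self_of_nhds) using 1
  noncomm_ring
end
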